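/- Let 0 < p < α ≤ 1 and m ≥ 12. For every natural m_q with 2 ≤ m_q ≤ m/3: m·(m_q - 1)/m_q + 1 ≥ ⌈m_q·α + (m_q+1)·p⌉. That is, the minimal budget needed to saturate all isolated nodes in an optimal forest with smallest component of m_q edges meets or exceeds the budget needed to flip that component. -/

import Mathlib

/-!
The budget `⌈q α + (q + 1) p⌉` needed to flip a component with `q` edges is at most `2q + 1`
because `p < α ≤ 1`, while `m (q - 1) / q + 1 ≥ 2q + 1` amounts to `m (q - 1) ≥ 2q²`. The latter
follows from `m ≥ 3q` once `q ≥ 3`; for `q = 2` it needs `m ≥ 8`.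
-/

lemma ceil_mul_add_succ_mul_le {α p : ℝ} (hα : α ≤ 1) (hp : p ≤ 1) (q : ℕ) :
    ⌈(q : ℝ) * α + ((q : ℝ) + 1) * p⌉ ≤ 2 * (q : ℤ) + 1 := by
  rw [Int.ceil_le]
  push_cast
  have hq : (0 : ℝ) ≤ q := q.cast_nonneg
  nlinarith

lemma two_mul_sq_le_mul_pred {m q : ℕ} (hm : 8 ≤ m) (hq : 2 ≤ q) (hqm : 3 * q ≤ m) :
    2 * q * q ≤ m * (q - 1) := by
  obtain rfl | hq3 : q = 2 ∨ 3 ≤ q := by omega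
  · omega
  · calc 2 * q * q ≤ 3 * q * (q - 1) := by
          zify [show 1 ≤ q by omega]
          nlinarith
      _ ≤ m * (q - 1) := Nat.mul_le_mul_right _ hqm

theorem stmt19_general (m mq : ℕ) (hm : 12 ≤ m) (hmq : 2 ≤ mq)
    (hmq3 : (mq : ℝ) ≤ (m : ℝ) / 3) (α p : ℝ)
    (hpα : p < α) (hα : α ≤ 1) :
    (m : ℝ) * ((mq : ℝ) - 1) / (mq : ℝ) + 1
      ≥ ((⌈(mq : ℝ) * α + ((mq : ℝ) + 1) * p⌉ : ℤ) : ℝ) := by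
  have hceil : ((⌈(mq : ℝ) * α + ((mq : ℝ) + 1) * p⌉ : ℤ) : ℝ) ≤ 2 * mq + 1 := by
    exact_mod_cast ceil_mul_add_succ_mul_le hα (by linarith) mq
  have hmqm : 3 * mq ≤ m := by
    have : 3 * (mq : ℝ) ≤ m := by linarith
    exact_mod_cast this
  have hsq : 2 * (mq : ℝ) * mq ≤ m * ((mq : ℝ) - 1) := by
    have := two_mul_sq_le_mul_pred (by omega) hmq hmqm
    rw [← Nat.cast_pred (by omega)]
    exact_mod_cast this
  have hmq0 : (0 : ℝ) < mq := by positivity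
  have : 2 * (mq : ℝ) ≤ m * ((mq : ℝ) - 1) / mq := by
    rw [le_div_iff₀ hmq0]
    linarith
  linarith

/-- For `0 < p < α ≤ 1`, `m ≥ 12`, and `2 ≤ m_q ≤ m/3`:
`m·(m_q-1)/m_q + 1 ≥ ⌈m_q·α + (m_q+1)·p⌉`. -/
theorem stmt19 (m mq : ℕ) (hm : 12 ≤ m) (hmq : 2 ≤ mq)
    (hmq3 : (mq : ℝ) ≤ (m : ℝ) / 3) (α p : ℝ)
    (hp : 0 < p) (hpα : p < α) (hα : α ≤ 1) :
    (m : ℝ) * ((mq : ℝ) - 1) / (mq : ℝ) + 1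
      ≥ ((⌈(mq : ℝ) * α + ((mq : ℝ) + 1) * p⌉ : ℤ) : ℝ) :=
  stmt19_general m mq hm hmq hmq3 α p hpα hα
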